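/- arXiv:2012.04524 — 4 statements merged into one kernel-verified Lean document; each statement's English description precedes it below -/
import Mathlib

section
/- Let Φ be an m×n complex matrix, Z = diag(z_1,...,z_m) a diagonal matrix with z_μ ∈ ℝ, ρ > 0, and suppose λ + ρ z_μ ≠ 0 for all μ. Define M_LAMP = ρ((ΦΦ*/n) - I_m)Z. If v is an eigenvector of M_LAMP with eigenvalue λ, then Φ* Z v ≠ 0, and the vector x = Φ* Z v satisfies ((1/n) Φ* (ρZ(λ I_m + ρZ)^{-1}) Φ) x = x. -/
open Matrix

theorem stmt0 (m n : ℕ) (hn : 0 < n) (Φ : Matrix (Fin m) (Fin n) ℂ)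
    (z : Fin m → ℝ) (ρ : ℝ) (hρ : 0 < ρ) (lam : ℂ)
    (hz : ∀ μ, lam + (ρ : ℂ) * (z μ) ≠ 0)
    (Z : Matrix (Fin m) (Fin m) ℂ) (hZ : Z = Matrix.diagonal (fun μ => (z μ : ℂ)))
    (MLAMP : Matrix (Fin m) (Fin m) ℂ)
    (hM : MLAMP = (ρ : ℂ) • (((n : ℂ)⁻¹ • (Φ * Φᴴ)) - 1) * Z)
    (v : Fin m → ℂ) (hv : v ≠ 0) (hev : MLAMP *ᵥ v = lam • v) :
    Φᴴ *ᵥ (Z *ᵥ v) ≠ 0 ∧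
      (((n : ℂ)⁻¹ • (Φᴴ * Matrix.diagonal (fun μ => (ρ : ℂ) * (z μ) / (lam + (ρ : ℂ) * (z μ))) * Φ))
          *ᵥ (Φᴴ *ᵥ (Z *ᵥ v))) = Φᴴ *ᵥ (Z *ᵥ v) := by
  subst hZ hM
  have hnC : (n : ℂ) ≠ 0 := Nat.cast_ne_zero.mpr hn.ne'
  have hρC : (ρ : ℂ) ≠ 0 := by exact_mod_cast hρ.ne'
  set w : Fin m → ℂ := (Matrix.diagonal (fun μ => (z μ : ℂ))) *ᵥ v with hw
  have hwμ : ∀ μ, w μ = (z μ : ℂ) * v μ := by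
    intro μ; simp [hw, Matrix.mulVec_diagonal]
  have heq : (ρ : ℂ) • ((n : ℂ)⁻¹ • (Φ *ᵥ (Φᴴ *ᵥ w)) - w) = lam • v := by
    rw [← hev, Matrix.smul_mul, Matrix.smul_mulVec, ← Matrix.mulVec_mulVec,
      Matrix.sub_mulVec, Matrix.smul_mulVec, ← Matrix.mulVec_mulVec,
      Matrix.one_mulVec, ← hw]
  have key : ∀ μ, (ρ : ℂ) * (n : ℂ)⁻¹ * (Φ *ᵥ (Φᴴ *ᵥ w)) μ
      = (lam + (ρ : ℂ) * (z μ)) * v μ := by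
    intro μ
    have h := congrFun heq μ
    simp only [Pi.smul_apply, Pi.sub_apply, smul_eq_mul] at h
    rw [hwμ] at h
    ring_nf
    ring_nf at h
    linear_combination h
  constructor
  · intro h0
    rw [h0] at key
    simp only [Matrix.mulVec_zero, Pi.zero_apply, mul_zero] at key
    apply hv
    funext μ
    have := (key μ).symm
    exact (mul_eq_zero.mp this).resolve_left (hz μ)
  · have hΦw : Φ *ᵥ (Φᴴ *ᵥ w) = fun μ => (ρ : ℂ)⁻¹ * (n : ℂ) * ((lam + (ρ : ℂ) * (z μ)) * v μ) := by
      funext μ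
      have := key μ
      field_simp at this ⊢
      linear_combination this
    rw [Matrix.smul_mulVec, ← Matrix.mulVec_mulVec, ← Matrix.mulVec_mulVec, hΦw]
    have hinner : (Matrix.diagonal (fun μ => (ρ:ℂ) * (z μ) / (lam + (ρ:ℂ) * (z μ)))) *ᵥ
        (fun μ => (ρ:ℂ)⁻¹ * (n:ℂ) * ((lam + (ρ:ℂ) * (z μ)) * v μ)) = (n:ℂ) • w := by
      funext μ
      rw [Matrix.mulVec_diagonal, Pi.smul_apply, hwμ]
      have h := hz μ
      field_simp
      ring
    rw [hinner, Matrix.mulVec_smul, smul_smul, inv_mul_cancel₀ hnC, one_smul]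
end

section
/- Let Φ be an m×n complex matrix, Z = diag(z_1,...,z_m) with real entries, ρ > 0 such that 1 + ρ z_μ ≠ 0 for all μ. Define M_LAMP = ρ((ΦΦ*/n) - I_m)Z and M_TAP = -(1/ρ) I_n + (1/n) Φ* (Z(I_m + ρZ)^{-1}) Φ. If x is an eigenvector of M_TAP with eigenvalue λ_TAP, then the vector u = (I_m + ρZ)^{-1} (Φ/√n) x satisfies M_LAMP u = u + ρ λ_TAP (I_m + ρZ) u. -/
open Matrix

theorem stmt1 (m n : ℕ) (hn : 0 < n) (Φ : Matrix (Fin m) (Fin n) ℂ)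
    (z : Fin m → ℝ) (ρ : ℝ) (hρ : 0 < ρ)
    (hz : ∀ μ, (1 : ℝ) + ρ * z μ ≠ 0)
    (Z : Matrix (Fin m) (Fin m) ℂ) (hZ : Z = Matrix.diagonal (fun μ => (z μ : ℂ)))
    (MLAMP : Matrix (Fin m) (Fin m) ℂ)
    (hML : MLAMP = (ρ : ℂ) • (((n : ℂ)⁻¹ • (Φ * Φᴴ)) - 1) * Z)
    (MTAP : Matrix (Fin n) (Fin n) ℂ)
    (hMT : MTAP = (-(ρ : ℂ)⁻¹) • 1 +
      (n : ℂ)⁻¹ • (Φᴴ * Matrix.diagonal (fun μ => ((z μ : ℂ)) / (1 + (ρ : ℂ) * z μ)) * Φ))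
    (lamTAP : ℂ) (x : Fin n → ℂ) (hx : x ≠ 0) (hev : MTAP *ᵥ x = lamTAP • x)
    (u : Fin m → ℂ)
    (hu : u = Matrix.diagonal (fun μ => ((1 : ℂ) + (ρ : ℂ) * z μ)⁻¹) *ᵥ
      (((Real.sqrt n : ℂ))⁻¹ • (Φ *ᵥ x))) :
    MLAMP *ᵥ u = u + ((ρ : ℂ) * lamTAP) •
      (Matrix.diagonal (fun μ => ((1 : ℂ) + (ρ : ℂ) * z μ)) *ᵥ u) := by
  subst hZ hML hMT hu
  have hn' : (n : ℂ) ≠ 0 := Nat.cast_ne_zero.mpr hn.ne'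
  have hρ' : (ρ : ℂ) ≠ 0 := Complex.ofReal_ne_zero.mpr hρ.ne'
  have hzC : ∀ μ, (1 : ℂ) + (ρ : ℂ) * z μ ≠ 0 := by
    intro μ
    have : ((1 + ρ * z μ : ℝ) : ℂ) ≠ 0 := Complex.ofReal_ne_zero.mpr (hz μ)
    simpa using this
  set c : ℂ := ((Real.sqrt n : ℂ))⁻¹ with hc
  set E := Matrix.diagonal (fun μ => ((z μ : ℂ)) / (1 + (ρ : ℂ) * z μ)) with hE
  set D := Matrix.diagonal (fun μ => ((1 : ℂ) + (ρ : ℂ) * z μ)⁻¹) with hD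
  set w := Φ *ᵥ x with hw
  have key : (Φᴴ * E * Φ) *ᵥ x = ((n : ℂ) * (lamTAP + (ρ : ℂ)⁻¹)) • x := by
    rw [Matrix.add_mulVec, Matrix.smul_mulVec, Matrix.smul_mulVec,
      Matrix.one_mulVec] at hev
    have h2 : (n : ℂ)⁻¹ • ((Φᴴ * E * Φ) *ᵥ x) = (lamTAP + (ρ : ℂ)⁻¹) • x := by
      rw [add_smul, ← hev]; module
    have h3 := congrArg (fun v => (n : ℂ) • v) h2
    simpa [smul_smul, mul_inv_cancel₀ hn'] using h3
  -- rewrite u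
  have hu' : D *ᵥ (c • w) = c • (D *ᵥ w) := (Matrix.mulVec_smul _ _ _)
  rw [hu']
  have hL : ((ρ : ℂ) • ((n : ℂ)⁻¹ • (Φ * Φᴴ) - 1) * Matrix.diagonal (fun μ => (z μ : ℂ)))
      *ᵥ (c • (D *ᵥ w))
      = (c * ρ) • ((lamTAP + (ρ : ℂ)⁻¹) • w - E *ᵥ w) := by
    rw [Matrix.mulVec_smul, Matrix.mulVec_mulVec]
    have hZD : Matrix.diagonal (fun μ => (z μ : ℂ)) * D = E := by
      simp [hD, hE, Matrix.diagonal_mul_diagonal, div_eq_mul_inv]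
    rw [Matrix.mul_assoc, hZD]
    have : ((n : ℂ)⁻¹ • (Φ * Φᴴ) - 1) * E = (n : ℂ)⁻¹ • (Φ * Φᴴ * E) - E := by
      rw [Matrix.sub_mul, Matrix.smul_mul, Matrix.one_mul, Matrix.mul_assoc]
    rw [Matrix.smul_mul, this, Matrix.smul_mulVec, Matrix.sub_mulVec,
      Matrix.smul_mulVec]
    have hΦ : (Φ * Φᴴ * E) *ᵥ w = ((n : ℂ) * (lamTAP + (ρ : ℂ)⁻¹)) • w := by
      have : Φ * Φᴴ * E * Φ = Φ * (Φᴴ * E * Φ) := by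
        simp only [Matrix.mul_assoc]
      rw [hw, Matrix.mulVec_mulVec, this, ← Matrix.mulVec_mulVec, key,
        Matrix.mulVec_smul]
    rw [hΦ, smul_smul, smul_smul, ← mul_assoc, inv_mul_cancel₀ hn', one_mul]
  rw [hL]
  have hDD : Matrix.diagonal (fun μ => ((1 : ℂ) + (ρ : ℂ) * z μ)) *ᵥ (c • (D *ᵥ w))
      = c • w := by
    have h1 : Matrix.diagonal (fun μ => ((1 : ℂ) + (ρ : ℂ) * z μ)) * D = 1 := by
      rw [hD, Matrix.diagonal_mul_diagonal]
      have hfun : (fun i => ((1 : ℂ) + (ρ : ℂ) * z i) * ((1 : ℂ) + (ρ : ℂ) * z i)⁻¹)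
          = fun _ => (1 : ℂ) := funext fun i => mul_inv_cancel₀ (hzC i)
      rw [hfun, Matrix.diagonal_one]
    rw [Matrix.mulVec_smul, Matrix.mulVec_mulVec, h1, Matrix.one_mulVec]
  rw [hDD]
  ext i
  simp only [Pi.add_apply, Pi.smul_apply, Pi.sub_apply, smul_eq_mul, hE,
    Matrix.mulVec_diagonal, hD]
  field_simp [hzC i]
  ring
end

section
/- Under the hypotheses of the previous statement, if additionally λ_TAP = 0, then M_LAMP u = u, i.e. u is an eigenvector of M_LAMP with eigenvalue 1. -/
open Matrix

theorem stmt2 (m n : ℕ) (hn : 0 < n) (Φ : Matrix (Fin m) (Fin n) ℂ)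
    (z : Fin m → ℝ) (ρ : ℝ) (hρ : 0 < ρ)
    (hz : ∀ μ, (1 : ℝ) + ρ * z μ ≠ 0)
    (Z : Matrix (Fin m) (Fin m) ℂ) (hZ : Z = Matrix.diagonal (fun μ => (z μ : ℂ)))
    (MLAMP : Matrix (Fin m) (Fin m) ℂ)
    (hML : MLAMP = (ρ : ℂ) • (((n : ℂ)⁻¹ • (Φ * Φᴴ)) - 1) * Z)
    (MTAP : Matrix (Fin n) (Fin n) ℂ)
    (hMT : MTAP = (-(ρ : ℂ)⁻¹) • 1 +
      (n : ℂ)⁻¹ • (Φᴴ * Matrix.diagonal (fun μ => ((z μ : ℂ)) / (1 + (ρ : ℂ) * z μ)) * Φ))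
    (x : Fin n → ℂ) (hx : x ≠ 0) (hev : MTAP *ᵥ x = 0)
    (u : Fin m → ℂ)
    (hu : u = Matrix.diagonal (fun μ => ((1 : ℂ) + (ρ : ℂ) * z μ)⁻¹) *ᵥ
      (((Real.sqrt n : ℂ))⁻¹ • (Φ *ᵥ x))) :
    MLAMP *ᵥ u = u := by
  have hρC : (ρ : ℂ) ≠ 0 := by
    exact_mod_cast hρ.ne'
  have hnC : (n : ℂ) ≠ 0 := by
    exact_mod_cast hn.ne'
  have hzC : ∀ μ, (1 : ℂ) + (ρ : ℂ) * z μ ≠ 0 := by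
    intro μ h
    apply hz μ
    exact_mod_cast h
  set E : Matrix (Fin m) (Fin m) ℂ :=
    Matrix.diagonal (fun μ => ((z μ : ℂ)) / (1 + (ρ : ℂ) * z μ)) with hE
  set D : Matrix (Fin m) (Fin m) ℂ :=
    Matrix.diagonal (fun μ => ((1 : ℂ) + (ρ : ℂ) * z μ)⁻¹) with hD
  set w : Fin m → ℂ := Φ *ᵥ x with hw
  set c : ℂ := ((Real.sqrt n : ℂ))⁻¹ with hc
  -- key identity from the TAP eigenvalue equation
  have key : (Φᴴ * E * Φ) *ᵥ x = ((n : ℂ) / ρ) • x := by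
    rw [hMT, Matrix.add_mulVec, Matrix.smul_mulVec, Matrix.smul_mulVec,
      Matrix.one_mulVec] at hev
    have h1 : (n : ℂ)⁻¹ • ((Φᴴ * E * Φ) *ᵥ x) = (ρ : ℂ)⁻¹ • x := by
      have := hev
      rw [add_eq_zero_iff_eq_neg, neg_smul, neg_inj] at this
      exact this.symm
    calc (Φᴴ * E * Φ) *ᵥ x = (n : ℂ) • ((n : ℂ)⁻¹ • ((Φᴴ * E * Φ) *ᵥ x)) := by
          rw [smul_smul, mul_inv_cancel₀ hnC, one_smul]
      _ = ((n : ℂ) / ρ) • x := by rw [h1, smul_smul, div_eq_mul_inv]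
  have key2 : (Φ * (Φᴴ * E * Φ)) *ᵥ x = ((n : ℂ) / ρ) • w := by
    rw [← Matrix.mulVec_mulVec, key, Matrix.mulVec_smul, hw]
  -- Z * D = E
  have hZD : Z * D = E := by
    simp [hZ, hD, hE, Matrix.diagonal_mul_diagonal, div_eq_mul_inv]
  have hu' : u = c • (D *ᵥ w) := by
    rw [hu, Matrix.mulVec_smul]
  rw [hML, hu']
  rw [Matrix.mulVec_smul]
  congr 1
  rw [Matrix.mulVec_mulVec, Matrix.smul_mul, Matrix.smul_mul, Matrix.mul_assoc, hZD,
    Matrix.smul_mulVec, Matrix.sub_mul, Matrix.smul_mul, Matrix.one_mul,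
    Matrix.sub_mulVec, Matrix.smul_mulVec]
  have h3 : (Φ * (Φᴴ * E)) *ᵥ w = ((n : ℂ) / ρ) • w := by
    rw [hw, Matrix.mulVec_mulVec, Matrix.mul_assoc, key2]
  rw [show Φ * Φᴴ * E = Φ * (Φᴴ * E) from Matrix.mul_assoc _ _ _]
  rw [h3]
  funext μ
  rw [hE, hD]
  simp only [Pi.smul_apply, Pi.sub_apply, smul_eq_mul, Matrix.mulVec_diagonal]
  have hμ := hzC μ
  field_simp
  ring
end

section
/- Let Φ ∈ ℂ^{m×n}, ρ > 0, and Z = diag(z_μ) with z_μ real, 1 + ρz_μ ≠ 0 for all μ. Define M_LAMP = ρ((ΦΦ*/n) - I_m)Z. Then the map x ↦ (I_m + ρZ)^{-1}(Φ/√n)x restricted to the kernel of M_TAP = -(1/ρ)I_n + (1/n)Φ*Z(I+ρZ)^{-1}Φ is injective into the eigenspace of M_LAMP for eigenvalue 1. -/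
open Matrix

theorem stmt11 (m n : ℕ) (hn : 0 < n) (Φ : Matrix (Fin m) (Fin n) ℂ)
    (z : Fin m → ℝ) (ρ : ℝ) (hρ : 0 < ρ)
    (hz : ∀ μ, (1 : ℝ) + ρ * z μ ≠ 0)
    (MLAMP : Matrix (Fin m) (Fin m) ℂ)
    (hML : MLAMP = (ρ : ℂ) • (((n : ℂ)⁻¹ • (Φ * Φᴴ)) - 1) *
      Matrix.diagonal (fun μ => (z μ : ℂ)))
    (MTAP : Matrix (Fin n) (Fin n) ℂ)
    (hMT : MTAP = (-(ρ : ℂ)⁻¹) • 1 +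
      (n : ℂ)⁻¹ • (Φᴴ * Matrix.diagonal (fun μ => ((z μ : ℂ)) / (1 + (ρ : ℂ) * z μ)) * Φ)) :
    ∀ x : Fin n → ℂ, MTAP *ᵥ x = 0 →
      (MLAMP *ᵥ (Matrix.diagonal (fun μ => ((1 : ℂ) + (ρ : ℂ) * z μ)⁻¹) *ᵥ
          (((Real.sqrt n : ℂ))⁻¹ • (Φ *ᵥ x)))
        = Matrix.diagonal (fun μ => ((1 : ℂ) + (ρ : ℂ) * z μ)⁻¹) *ᵥ
          (((Real.sqrt n : ℂ))⁻¹ • (Φ *ᵥ x))) ∧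
      ((Matrix.diagonal (fun μ => ((1 : ℂ) + (ρ : ℂ) * z μ)⁻¹) *ᵥ
          (((Real.sqrt n : ℂ))⁻¹ • (Φ *ᵥ x))) = 0 → x = 0) := by
  intro x hx
  have hρc : (ρ : ℂ) ≠ 0 := by exact_mod_cast hρ.ne'
  have hnc : (n : ℂ) ≠ 0 := by exact_mod_cast hn.ne'
  have hsc : ((Real.sqrt n : ℂ))⁻¹ ≠ 0 := by
    have : Real.sqrt n ≠ 0 := by positivity
    simpa using this
  have hzc : ∀ μ, ((1 : ℂ) + (ρ : ℂ) * z μ) ≠ 0 := by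
    intro μ; exact_mod_cast hz μ
  set w : Fin m → ℂ := fun μ => (z μ : ℂ) / (1 + (ρ : ℂ) * z μ) with hw
  set c : ℂ := ((Real.sqrt n : ℂ))⁻¹ with hc
  set y : Fin m → ℂ := Φ *ᵥ x with hy
  rw [hMT, add_mulVec, smul_mulVec, smul_mulVec, one_mulVec,
    neg_smul, neg_add_eq_zero] at hx
  have hkey : (n : ℂ)⁻¹ • (Φᴴ *ᵥ (Matrix.diagonal w *ᵥ y)) = (ρ : ℂ)⁻¹ • x := by
    rw [hy, mulVec_mulVec, mulVec_mulVec]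
    exact hx.symm
  set u : Fin m → ℂ := Matrix.diagonal (fun μ => ((1 : ℂ) + (ρ : ℂ) * z μ)⁻¹) *ᵥ (c • y)
    with hu
  constructor
  · -- eigenvector part
    have hd1 : Matrix.diagonal (fun μ => (z μ : ℂ)) *ᵥ u = c • (Matrix.diagonal w *ᵥ y) := by
      funext μ
      simp only [hu, mulVec_diagonal, Pi.smul_apply, smul_eq_mul, hw]
      field_simp [hzc μ]
    have hkey2 : (n : ℂ)⁻¹ • (Φ *ᵥ (Φᴴ *ᵥ (Matrix.diagonal w *ᵥ y))) = (ρ : ℂ)⁻¹ • y := by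
      have := congrArg (fun v => Φ *ᵥ v) hkey
      simpa [mulVec_smul, hy] using this
    have hstep : MLAMP *ᵥ u =
        (ρ : ℂ) • ((n : ℂ)⁻¹ • (Φ *ᵥ (Φᴴ *ᵥ (Matrix.diagonal (fun μ => (z μ : ℂ)) *ᵥ u)))
          - Matrix.diagonal (fun μ => (z μ : ℂ)) *ᵥ u) := by
      rw [hML, ← mulVec_mulVec, smul_mulVec, sub_mulVec, one_mulVec,
        smul_mulVec, ← mulVec_mulVec]
    rw [hstep, hd1]
    have : (n : ℂ)⁻¹ • (Φ *ᵥ (Φᴴ *ᵥ (c • (Matrix.diagonal w *ᵥ y)))) =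
        c • ((ρ : ℂ)⁻¹ • y) := by
      rw [mulVec_smul, mulVec_smul, smul_comm, hkey2]
    rw [this]
    funext μ
    simp only [hu, mulVec_diagonal, Pi.smul_apply, Pi.sub_apply, smul_eq_mul, hw]
    field_simp [hzc μ]
    ring
  · -- injectivity part
    intro h0
    have hy0 : y = 0 := by
      funext μ
      have := congrFun h0 μ
      simp only [hu, mulVec_diagonal, Pi.smul_apply, smul_eq_mul, Pi.zero_apply] at this ⊢
      rcases mul_eq_zero.mp this with h | h
      · exact absurd h (inv_ne_zero (hzc μ))
      · rcases mul_eq_zero.mp h with h | h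
        · exact absurd h hsc
        · exact h
    have : (ρ : ℂ)⁻¹ • x = 0 := by
      rw [← hkey, hy0]
      simp
    simpa [inv_ne_zero hρc] using this
end
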